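/- Let N be an integer with N ≥ 2. Then N is monomially irreducible if and only if N is a prime number or N ∈ {4, 6, 8, 12, 24}. -/

import Mathlib

open Matrix

/-- The elementary matrix `[[a, -1], [1, 0]]` over `ZMod N`. -/
def genMat {N : ℕ} (a : ZMod N) : Matrix (Fin 2) (Fin 2) (ZMod N) :=
  !![a, -1; 1, 0]

/-- `Mword [a₁, …, aₙ]` is the matrix `Mₙ(a₁, …, aₙ) = genMat aₙ * ⋯ * genMat a₁`. -/
def Mword {N : ℕ} (l : List (ZMod N)) : Matrix (Fin 2) (Fin 2) (ZMod N) :=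
  (l.reverse.map genMat).prod

/-- A tuple (encoded as a list) is a solution of `(E_N)` if its matrix is `±Id`. -/
def IsSolutionE {N : ℕ} (l : List (ZMod N)) : Prop :=
  Mword l = 1 ∨ Mword l = -1

/-- The size of the `k`-monomial minimal solution of `(E_N)`: the least positive `n`
such that the constant `n`-tuple `(k, …, k)` is a solution of `(E_N)`. -/
noncomputable def monomialSize (N : ℕ) (k : ZMod N) : ℕ :=
  sInf {n : ℕ | 0 < n ∧ IsSolutionE (List.replicate n k)}

/-- The `k`-monomial minimal solution of `(E_N)`. -/
noncomputable def monoSol (N : ℕ) (k : ZMod N) : List (ZMod N) :=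
  List.replicate (monomialSize N k) k

/-- The sum `⊕` of two tuples:
`(a₁,…,aₘ) ⊕ (b₁,…,bₗ) = (a₁+bₗ, a₂, …, aₘ₋₁, aₘ+b₁, b₂, …, bₗ₋₁)`. -/
def oplus {N : ℕ} (a b : List (ZMod N)) : List (ZMod N) :=
  (a.headD 0 + b.getLastD 0) ::
    ((a.drop 1).dropLast ++ (a.getLastD 0 + b.headD 0) :: (b.drop 1).dropLast)

/-- Two tuples are equivalent (`∼`) if one is obtained from the other by a cyclic
permutation, possibly composed with order reversal. -/
def TupEquiv {N : ℕ} (c d : List (ZMod N)) : Prop :=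
  (∃ i, d = c.rotate i) ∨ (∃ i, d = c.reverse.rotate i)

/-- A tuple is reducible if it is equivalent to a sum `a ⊕ b` where `b` is a solution of
`(E_N)` and both `a`, `b` have length at least `3`. -/
def IsReducibleE {N : ℕ} (c : List (ZMod N)) : Prop :=
  ∃ a b : List (ZMod N), 3 ≤ a.length ∧ 3 ≤ b.length ∧ IsSolutionE b ∧
    TupEquiv c (oplus a b)

/-- An irreducible solution of `(E_N)`: a solution of size at least `3` that is not
reducible (the solution `(0,0)` is not considered irreducible). -/
def IsIrreducibleE {N : ℕ} (c : List (ZMod N)) : Prop :=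
  IsSolutionE c ∧ 3 ≤ c.length ∧ ¬ IsReducibleE c

/-- A reducible solution of `(E_N)`: a solution that is not irreducible. -/
def IsReducibleSol {N : ℕ} (c : List (ZMod N)) : Prop :=
  IsSolutionE c ∧ ¬ IsIrreducibleE c

/-- `N` is monomially irreducible if for every nonzero `k ∈ ZMod N` the `k`-monomial
minimal solution of `(E_N)` is irreducible. -/
def MonomiallyIrreducible (N : ℕ) : Prop :=
  ∀ k : ZMod N, k ≠ 0 → IsIrreducibleE (monoSol N k)

/-- `N` is quasi monomially irreducible if for every integer `k` coprime to `N` the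
`(k mod N)`-monomial minimal solution of `(E_N)` is irreducible. -/
def QuasiMonomiallyIrreducible (N : ℕ) : Prop :=
  ∀ k : ℤ, Int.gcd k (N : ℤ) = 1 → IsIrreducibleE (monoSol N (k : ZMod N))

/-- `N` is semi monomially irreducible: if `N` is even but not divisible by `4`, this
requires that for every integer `a` coprime to `N/2` the `(2a mod N)`-monomial minimal
solution of `(E_N)` is irreducible; otherwise (i.e. `N` odd or divisible by `4`), it
requires the same for every integer `a` coprime to `N`. -/
def SemiMonomiallyIrreducible (N : ℕ) : Prop :=
  if 2 ∣ N ∧ ¬ (4 ∣ N) then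
    ∀ a : ℤ, Int.gcd a ((N / 2 : ℕ) : ℤ) = 1 →
      IsIrreducibleE (monoSol N ((2 * a : ℤ) : ZMod N))
  else
    ∀ a : ℤ, Int.gcd a (N : ℤ) = 1 →
      IsIrreducibleE (monoSol N ((2 * a : ℤ) : ZMod N))

/-!
The entries of `genMat k ^ n` are the continuants `contSeq k n`, so the constant tuple of
length `n` is a solution iff `contSeq k n = 0` and `contSeq k (n + 1) = ±1`, and the
`k`-monomial minimal solution of size `n` is reducible iff `contSeq k i = ±1` for some
`2 ≤ i ≤ n - 2`: it then splits as `(k - g, k, …, k, k - g) ⊕ (g, k, …, k, g)`.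

Over a field the Cassini identity `contSeq k (i + 1) * contSeq k (i - 1) = contSeq k i ^ 2 - 1`
turns such an `i` into a solution of length `i ± 1`, so primes are monomially irreducible;
`4, 6, 8, 12, 24` are checked by computation. Any other composite `N` is either divisible by
`a * a` with `a ≥ 3`, and then `k = N / a` satisfies `k * k = 0` and `contSeq k 3 = -1`, or it is
`p * d` with `p` coprime to `6` and to `d ≥ 2`; then `k ≡ 2 (mod p)`, `k ≡ 1 (mod d)` has
`contSeq k (p ± 1) = ±1` while all its solution lengths are multiples of `3 * p`.
-/

/-- `contSeq k n` is the continuant of the constant `(n - 1)`-tuple `(k, …, k)`, i.e. the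
rescaled Chebyshev value `Sₙ₋₁(k)`; it is the lower left entry of `genMat k ^ n`. -/
def contSeq {R : Type*} [CommRing R] (k : R) : ℕ → R
  | 0 => 0
  | 1 => 1
  | n + 2 => k * contSeq k (n + 1) - contSeq k n

/-- The constant tuple `(k, …, k)` of length `n` solves `(E_N)`; see `isSolutionE_replicate_iff`. -/
def IsSolLength {R : Type*} [CommRing R] (k : R) (n : ℕ) : Prop :=
  contSeq k n = 0 ∧ (contSeq k (n + 1) = 1 ∨ contSeq k (n + 1) = -1)

instance {R : Type*} [CommRing R] [DecidableEq R] (k : R) (n : ℕ) :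
    Decidable (IsSolLength k n) :=
  inferInstanceAs (Decidable (_ ∧ _))

/-- Reducibility of the `k`-monomial minimal solution; see `isIrreducibleE_monoSol_iff`. -/
def MonoReducible {R : Type*} [CommRing R] (k : R) : Prop :=
  ∃ i, 2 ≤ i ∧ (∀ m, 0 < m → IsSolLength k m → i + 2 ≤ m) ∧
    (contSeq k i = 1 ∨ contSeq k i = -1)

namespace contSeq

variable {R S : Type*} [CommRing R] [CommRing S]

@[simp] lemma zero (k : R) : contSeq k 0 = 0 := rfl
@[simp] lemma one (k : R) : contSeq k 1 = 1 := rfl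
lemma add_two (k : R) (n : ℕ) : contSeq k (n + 2) = k * contSeq k (n + 1) - contSeq k n := rfl
@[simp] lemma two (k : R) : contSeq k 2 = k := by simp [add_two]

lemma map (φ : R →+* S) (k : R) (n : ℕ) : φ (contSeq k n) = contSeq (φ k) n := by
  induction n using Nat.strong_induction_on with
  | _ n ih =>
    match n, ih with
    | 0, _ => simp
    | 1, _ => simp
    | n + 2, ih => simp [add_two, ih n (by omega), ih (n + 1) (by omega)]

lemma prod (k : R) (l : S) (n : ℕ) : contSeq (k, l) n = (contSeq k n, contSeq l n) :=
  Prod.ext (map (RingHom.fst R S) _ n) (map (RingHom.snd R S) _ n)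

lemma of_two (n : ℕ) : contSeq (2 : R) n = n := by
  induction n using Nat.strong_induction_on with
  | _ n ih =>
    match n, ih with
    | 0, _ => simp
    | 1, _ => simp
    | n + 2, ih => rw [add_two, ih n (by omega), ih (n + 1) (by omega)]; push_cast; ring

lemma of_one_add_three (n : ℕ) : contSeq (1 : R) (n + 3) = -contSeq 1 n := by
  rw [add_two, add_two]; ring

lemma of_one_mod_six (n : ℕ) : contSeq (1 : R) n = contSeq 1 (n % 6) := by
  induction n using Nat.strong_induction_on with
  | _ n ih =>
    rcases lt_or_ge n 6 with hn | hn
    · rw [Nat.mod_eq_of_lt hn]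
    · obtain ⟨m, rfl⟩ := Nat.exists_eq_add_of_le' hn
      rw [Nat.add_mod_right, ← ih m (by omega), show m + 6 = m + 3 + 3 from rfl,
        of_one_add_three, of_one_add_three, neg_neg]

lemma of_one_eq_zero_iff [Nontrivial R] (n : ℕ) : contSeq (1 : R) n = 0 ↔ 3 ∣ n := by
  induction n using Nat.strong_induction_on with
  | _ n ih =>
    match n, ih with
    | 0, _ => simp
    | 1, _ => simp
    | 2, _ => simp
    | n + 3, ih => rw [of_one_add_three, neg_eq_zero, ih n (by omega), Nat.dvd_add_self_right]

lemma cassini (k : R) (n : ℕ) :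
    contSeq k (n + 2) * contSeq k n = contSeq k (n + 1) ^ 2 - 1 := by
  induction n with
  | zero => simp
  | succ n ih =>
    rw [add_two k (n + 1)]
    linear_combination ih - contSeq k (n + 2) * add_two k n

end contSeq

section MonoReducible

variable {R S : Type*} [CommRing R] [CommRing S]

lemma IsSolLength.map (φ : R →+* S) {k : R} {n : ℕ} (h : IsSolLength k n) :
    IsSolLength (φ k) n := by
  obtain ⟨h0, h1⟩ := h
  refine ⟨by rw [← contSeq.map, h0, map_zero], ?_⟩
  rw [← contSeq.map]
  rcases h1 with h1 | h1 <;> simp [h1]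

lemma MonoReducible.of_map {φ : R →+* S} (hφ : Function.Injective φ) {k : R}
    (h : MonoReducible (φ k)) : MonoReducible k := by
  obtain ⟨i, hi, hlen, hpm⟩ := h
  refine ⟨i, hi, fun m hm hs => hlen m hm (hs.map φ), ?_⟩
  rw [← contSeq.map] at hpm
  rcases hpm with h | h
  · exact Or.inl (hφ (by rw [h, map_one]))
  · exact Or.inr (hφ (by rw [h, map_neg, map_one]))

lemma isSolLength_of_contSeq_eq_zero [IsDomain R] {k : R} {n : ℕ} (h : contSeq k n = 0) :
    IsSolLength k n := by
  refine ⟨h, mul_self_eq_one_iff.mp ?_⟩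
  linear_combination -(contSeq.cassini k n) + contSeq k (n + 2) * h

lemma MonoReducible.ne_zero {k : R} (h : MonoReducible k) : k ≠ 0 := by
  rintro rfl
  obtain ⟨i, hi, hlen, -⟩ := h
  have := hlen 2 two_pos ⟨by simp, Or.inr (by simp [contSeq.add_two])⟩
  omega

/-- In a domain, `contSeq k i = ±1` forces `contSeq k (i - 1) = 0` or `contSeq k (i + 1) = 0`
by the Cassini identity, so a solution length lies below `i + 2`. -/
lemma not_monoReducible [IsDomain R] (k : R) : ¬ MonoReducible k := by
  rintro ⟨i, hi, hlen, hpm⟩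
  obtain ⟨j, rfl⟩ := Nat.exists_eq_add_of_le' hi
  have hcassini : contSeq k (j + 3) * contSeq k (j + 1) = 0 := by
    have h := contSeq.cassini k (j + 1)
    rcases hpm with h1 | h1 <;> rw [h1] at h <;> linear_combination h
  rcases mul_eq_zero.mp hcassini with h | h
  · have := hlen (j + 3) (by omega) (isSolLength_of_contSeq_eq_zero h); omega
  · have := hlen (j + 1) (by omega) (isSolLength_of_contSeq_eq_zero h); omega

lemma monoReducible_of_mul_self_eq_zero {k : R} (h2k : 2 * k ≠ 0) (hsq : k * k = 0) :
    MonoReducible k := by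
  have : Nontrivial R := nontrivial_of_ne _ _ h2k
  have hk : k ≠ 0 := by rintro rfl; simp at h2k
  have c3 : contSeq k 3 = -1 := by
    rw [contSeq.add_two, contSeq.two, contSeq.one]; linear_combination hsq
  have c4 : contSeq k 4 = -(2 * k) := by
    rw [contSeq.add_two, c3, contSeq.two]; ring
  refine ⟨3, by norm_num, fun m hm hs => ?_, Or.inr c3⟩
  by_contra! hlt
  interval_cases m
  · exact one_ne_zero hs.1
  · exact hk (contSeq.two k ▸ hs.1)
  · exact neg_ne_zero.mpr one_ne_zero (c3 ▸ hs.1)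
  · exact h2k (neg_eq_zero.mp (c4 ▸ hs.1))

/-- The second factor contributes solution lengths divisible by `3`, the first one lengths
divisible by `p`; the entry `contSeq _ (p ± 1) = ±1` lies well below `3 * p`. -/
lemma monoReducible_two_one [Nontrivial S] {p : ℕ} (hp : 1 < p) (hp6 : p.Coprime 6) :
    MonoReducible ((2, 1) : ZMod p × S) := by
  have hc (m : ℕ) : contSeq ((2, 1) : ZMod p × S) m = ((m : ZMod p), contSeq 1 m) := by
    rw [contSeq.prod, contSeq.of_two]
  have hlen (m : ℕ) (hm : 0 < m) (hs : IsSolLength ((2, 1) : ZMod p × S) m) : 3 * p ≤ m := by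
    have h0 := hs.1
    rw [hc, Prod.mk_eq_zero, ZMod.natCast_eq_zero_iff, contSeq.of_one_eq_zero_iff] at h0
    have h3p : Nat.Coprime 3 p := (Nat.Coprime.coprime_dvd_right (by norm_num) hp6).symm
    exact Nat.le_of_dvd hm (h3p.mul_dvd_of_dvd_of_dvd h0.2 h0.1)
  have hp6' : p % 6 = 1 ∨ p % 6 = 5 := by
    have h2 : ¬ 2 ∣ p := (Nat.Prime.coprime_iff_not_dvd Nat.prime_two).mp
      (Nat.Coprime.coprime_dvd_right (by norm_num) hp6).symm
    have h3 : ¬ 3 ∣ p := (Nat.Prime.coprime_iff_not_dvd Nat.prime_three).mp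
      (Nat.Coprime.coprime_dvd_right (by norm_num) hp6).symm
    omega
  rcases hp6' with h | h
  · refine ⟨p + 1, by omega, fun m hm hs => (hlen m hm hs).trans' (by omega), Or.inl ?_⟩
    rw [hc, contSeq.of_one_mod_six, show (p + 1) % 6 = 2 by omega]
    simp
  · refine ⟨p - 1, by omega, fun m hm hs => (hlen m hm hs).trans' (by omega), Or.inr ?_⟩
    rw [hc, contSeq.of_one_mod_six, show (p - 1) % 6 = 4 by omega, Nat.cast_sub hp.le]
    simp [contSeq.add_two, Prod.ext_iff]

def IrreducibilityCertificate (k : R) (B : ℕ) : Prop :=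
  ∃ n < B, 0 < n ∧ IsSolLength k n ∧ ∀ i < n, 2 ≤ i → (contSeq k i = 1 ∨ contSeq k i = -1) →
    ∃ m < i + 2, 0 < m ∧ IsSolLength k m

instance [DecidableEq R] (k : R) (B : ℕ) : Decidable (IrreducibilityCertificate k B) :=
  inferInstanceAs (Decidable (∃ n < B, _))

lemma IrreducibilityCertificate.not_monoReducible {k : R} {B : ℕ}
    (h : IrreducibilityCertificate k B) : ¬ MonoReducible k := by
  rintro ⟨i, hi, hlen, hpm⟩
  obtain ⟨n, -, hn, hsol, hcert⟩ := h
  obtain ⟨m, hmi, hm, hsolm⟩ := hcert i (by have := hlen n hn hsol; omega) hi hpm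
  have := hlen m hm hsolm
  omega

end MonoReducible

section Matrices

variable {N : ℕ}

lemma genMat_pow_succ (k : ZMod N) (n : ℕ) :
    genMat k ^ (n + 1) =
      !![contSeq k (n + 2), -contSeq k (n + 1); contSeq k (n + 1), -contSeq k n] := by
  induction n with
  | zero => simp [genMat]
  | succ n ih =>
    rw [pow_succ, ih, genMat, Matrix.mul_fin_two, contSeq.add_two k (n + 1),
      contSeq.add_two k n]
    congr 1
    ring_nf

lemma Mword_replicate (k : ZMod N) (n : ℕ) : Mword (List.replicate n k) = genMat k ^ n := by
  simp [Mword, List.prod_replicate]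

lemma Mword_cons_append_singleton (x y : ZMod N) (l : List (ZMod N)) :
    Mword (x :: (l ++ [y])) = genMat y * Mword l * genMat x := by
  simp [Mword, mul_assoc]

lemma isSolutionE_replicate_iff (k : ZMod N) (n : ℕ) :
    IsSolutionE (List.replicate n k) ↔ IsSolLength k n := by
  rcases n with _ | n
  · simp [IsSolutionE, IsSolLength, Mword]
  have hrec := contSeq.add_two k n
  simp only [IsSolutionE, IsSolLength, Mword_replicate, genMat_pow_succ, ← Matrix.ext_iff,
    Fin.forall_fin_two, Matrix.of_apply, Matrix.cons_val', Matrix.cons_val_fin_one,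
    Matrix.cons_val_zero, Matrix.cons_val_one, Matrix.one_apply_eq, Matrix.one_apply_ne,
    Matrix.neg_apply, ne_eq, zero_ne_one, one_ne_zero, not_false_eq_true, neg_eq_zero, neg_zero,
    neg_inj]
  -- once `contSeq k (n + 1) = 0`, the recurrence gives the lower right entry
  grind

lemma Mword_sandwich_apply_one_one (x y k : ZMod N) (n : ℕ) :
    Mword (x :: (List.replicate n k ++ [y])) 1 1 = -contSeq k (n + 1) := by
  rw [Mword_cons_append_singleton, Mword_replicate]
  rcases n with _ | n
  · simp [genMat, Matrix.mul_apply]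
  · rw [genMat_pow_succ]
    simp [genMat, Matrix.mul_apply]

lemma contSeq_eq_of_isSolutionE_sandwich {x y k : ZMod N} {n : ℕ}
    (h : IsSolutionE (x :: (List.replicate n k ++ [y]))) :
    contSeq k (n + 1) = 1 ∨ contSeq k (n + 1) = -1 := by
  have h11 := Mword_sandwich_apply_one_one x y k n
  rcases h with h | h <;> rw [h] at h11 <;> simp at h11
  · exact Or.inr (by linear_combination h11)
  · exact Or.inl (by linear_combination -h11)

/-- With `g = contSeq k (n + 2) * contSeq k (n + 1)`, the matrix of `(g, k, …, k, g)` is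
`-contSeq k (n + 2)` times the identity, by the Cassini identity. -/
lemma isSolutionE_sandwich {k : ZMod N} {n : ℕ}
    (h : contSeq k (n + 2) = 1 ∨ contSeq k (n + 2) = -1) :
    IsSolutionE (contSeq k (n + 2) * contSeq k (n + 1) ::
      (List.replicate (n + 1) k ++ [contSeq k (n + 2) * contSeq k (n + 1)])) := by
  have hcassini := contSeq.cassini k n
  rw [IsSolutionE, Mword_cons_append_singleton, Mword_replicate, genMat_pow_succ]
  rcases h with h | h
  · right
    ext i j
    fin_cases i <;> fin_cases j <;> simp [genMat, Matrix.mul_apply, h]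
    linear_combination hcassini - contSeq k n * h
  · left
    ext i j
    fin_cases i <;> fin_cases j <;> simp [genMat, Matrix.mul_apply, h]
    linear_combination -hcassini + contSeq k n * h

end Matrices

lemma List.exists_eq_cons_append_singleton {α : Type*} {l : List α} (h : 2 ≤ l.length) :
    ∃ x m y, l = x :: (m ++ [y]) := by
  obtain ⟨x, t, rfl⟩ := List.exists_cons_of_ne_nil (List.ne_nil_of_length_pos (l := l) (by omega))
  rcases List.eq_nil_or_concat t with rfl | ⟨m, y, rfl⟩
  · simp at h
  · exact ⟨x, m, y, by simp⟩

section Reducibility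
variable {N : ℕ}

lemma oplus_cons_append_singleton (u u' v v' : ZMod N) (a b : List (ZMod N)) :
    oplus (u :: (a ++ [u'])) (v :: (b ++ [v'])) = (u + v') :: (a ++ (u' + v) :: b) := by
  simp [oplus, List.getLast?_cons, List.getLast?_append]

lemma TupEquiv.eq_replicate {n : ℕ} {k : ZMod N} {d : List (ZMod N)}
    (h : TupEquiv (List.replicate n k) d) : d = List.replicate n k := by
  rcases h with ⟨i, rfl⟩ | ⟨i, rfl⟩ <;> simp [List.rotate_replicate]

lemma isReducibleE_replicate_iff (k : ZMod N) (n : ℕ) :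
    IsReducibleE (List.replicate n k) ↔
      ∃ i, 2 ≤ i ∧ i + 2 ≤ n ∧ (contSeq k i = 1 ∨ contSeq k i = -1) := by
  constructor
  · rintro ⟨a, b, ha, hb, hsol, hequiv⟩
    obtain ⟨u, a, u', rfl⟩ := List.exists_eq_cons_append_singleton (by omega : 2 ≤ a.length)
    obtain ⟨v, b, v', rfl⟩ := List.exists_eq_cons_append_singleton (by omega : 2 ≤ b.length)
    have hrep := hequiv.eq_replicate
    rw [oplus_cons_append_singleton] at hrep
    have hmid : b = List.replicate b.length k :=
      List.eq_replicate_iff.2 ⟨rfl, fun x hx =>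
        List.eq_of_mem_replicate (n := n) (by rw [← hrep]; simp [hx])⟩
    have hn := congrArg List.length hrep
    simp only [List.length_cons, List.length_append, List.length_replicate,
      List.length_nil] at ha hb hn
    rw [hmid] at hsol
    exact ⟨b.length + 1, by omega, by omega, contSeq_eq_of_isSolutionE_sandwich hsol⟩
  · rintro ⟨i, hi, hin, hpm⟩
    obtain ⟨j, rfl⟩ := Nat.exists_eq_add_of_le' hi
    set g := contSeq k (j + 2) * contSeq k (j + 1)
    refine ⟨(k - g) :: (List.replicate (n - j - 3) k ++ [k - g]),
      g :: (List.replicate (j + 1) k ++ [g]), by simp; omega, by simp,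
      isSolutionE_sandwich hpm, Or.inl ⟨0, ?_⟩⟩
    rw [List.rotate_zero, oplus_cons_append_singleton, sub_add_cancel, ← List.replicate_succ,
      ← List.replicate_add, ← List.replicate_succ]
    congr 1
    omega

end Reducibility

section MonomialSize
variable {N : ℕ} [NeZero N]

lemma exists_isSolLength (k : ZMod N) : ∃ n, 0 < n ∧ IsSolLength k n := by
  have hdet : (genMat k).det = 1 := by simp [genMat, Matrix.det_fin_two_of]
  obtain ⟨u, hu⟩ := (Matrix.isUnit_iff_isUnit_det _).2 (hdet ▸ isUnit_one)
  refine ⟨orderOf u, orderOf_pos u, (isSolutionE_replicate_iff k _).1 (Or.inl ?_)⟩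
  rw [Mword_replicate, ← hu, ← Units.val_pow_eq_pow_val, pow_orderOf_eq_one, Units.val_one]

lemma isSolLength_monomialSize (k : ZMod N) :
    0 < monomialSize N k ∧ IsSolLength k (monomialSize N k) := by
  simp only [← isSolutionE_replicate_iff]
  obtain ⟨n, hn, hs⟩ := exists_isSolLength k
  exact Nat.sInf_mem (s := {n | 0 < n ∧ IsSolutionE (List.replicate n k)})
    ⟨n, hn, (isSolutionE_replicate_iff k n).2 hs⟩

lemma le_monomialSize_iff (k : ZMod N) {B : ℕ} :
    B ≤ monomialSize N k ↔ ∀ m, 0 < m → IsSolLength k m → B ≤ m :=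
  ⟨fun h m hm hs => h.trans (Nat.sInf_le ⟨hm, (isSolutionE_replicate_iff k m).2 hs⟩),
    fun h => h _ (isSolLength_monomialSize k).1 (isSolLength_monomialSize k).2⟩

lemma three_le_monomialSize {k : ZMod N} (hk : k ≠ 0) : 3 ≤ monomialSize N k := by
  have : Nontrivial (ZMod N) := nontrivial_of_ne _ _ hk
  refine (le_monomialSize_iff k).2 fun m hm hs => ?_
  by_contra! hm3
  interval_cases m
  · exact one_ne_zero hs.1
  · exact hk (contSeq.two k ▸ hs.1)

lemma isIrreducibleE_monoSol_iff {k : ZMod N} (hk : k ≠ 0) :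
    IsIrreducibleE (monoSol N k) ↔ ¬ MonoReducible k := by
  rw [IsIrreducibleE, monoSol, isSolutionE_replicate_iff,
    and_iff_right (isSolLength_monomialSize k).2, List.length_replicate,
    and_iff_right (three_le_monomialSize hk), isReducibleE_replicate_iff]
  simp only [MonoReducible, le_monomialSize_iff]

lemma monomiallyIrreducible_iff :
    MonomiallyIrreducible N ↔ ∀ k : ZMod N, k ≠ 0 → ¬ MonoReducible k :=
  forall₂_congr fun _ hk => isIrreducibleE_monoSol_iff hk

end MonomialSize

lemma exists_monoReducible_of_mul_self_dvd {N a : ℕ} (hN : N ≠ 0) (ha : 3 ≤ a)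
    (h : a * a ∣ N) : ∃ k : ZMod N, MonoReducible k := by
  obtain ⟨c, rfl⟩ := h
  have hc : 0 < c := Nat.pos_of_ne_zero (by rintro rfl; simp at hN)
  refine ⟨(a * c : ℕ), monoReducible_of_mul_self_eq_zero ?_ ?_⟩
  · rw [← Nat.cast_ofNat, ← Nat.cast_mul, Ne, ZMod.natCast_eq_zero_iff]
    intro hdvd
    have := Nat.le_of_dvd (by positivity) hdvd
    nlinarith [Nat.mul_le_mul_right (a * c) ha, Nat.mul_pos (by omega : 0 < a) hc]
  · rw [← Nat.cast_mul, ZMod.natCast_eq_zero_iff]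
    exact ⟨c, by ring⟩

lemma exists_monoReducible_of_coprime {p d : ℕ} (hp : 1 < p) (hp6 : p.Coprime 6) (hd : 2 ≤ d)
    (hpd : p.Coprime d) : ∃ k : ZMod (p * d), MonoReducible k := by
  have : Fact (1 < d) := ⟨hd⟩
  let e := ZMod.chineseRemainder hpd
  refine ⟨e.symm (2, 1), MonoReducible.of_map (φ := e.toRingHom) e.injective ?_⟩
  simpa using monoReducible_two_one (S := ZMod d) hp hp6

lemma mem_of_forall_prime_dvd_lt_five {N : ℕ} (hN : 2 ≤ N) (hNp : ¬ N.Prime) (h16 : ¬ 16 ∣ N)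
    (h9 : ¬ 9 ∣ N) (h5 : ∀ p, p.Prime → p ∣ N → p < 5) :
    N ∈ ({4, 6, 8, 12, 24} : Set ℕ) := by
  obtain ⟨e, m, hm2, rfl⟩ := Nat.exists_eq_pow_mul_and_not_dvd (by omega : N ≠ 0) 2 (by norm_num)
  obtain ⟨f, r, hr3, rfl⟩ :=
    Nat.exists_eq_pow_mul_and_not_dvd (by rintro rfl; simp at hN : m ≠ 0) 3 (by norm_num)
  obtain rfl : r = 1 := Nat.eq_one_iff_not_exists_prime_dvd.2 fun q hq hqr => by
    have := h5 q hq (dvd_mul_of_dvd_right (dvd_mul_of_dvd_right hqr _) _)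
    interval_cases q
    all_goals first | exact hm2 (dvd_mul_of_dvd_right hqr _) | exact hr3 hqr | norm_num at hq
  have he : e < 4 := by
    by_contra! h
    exact h16 ((pow_dvd_pow 2 h).mul_right _)
  have hf : f < 2 := by
    by_contra! h
    exact h9 (((pow_dvd_pow 3 h).mul_right 1).mul_left _)
  revert hN hNp
  interval_cases e <;> interval_cases f <;> norm_num

lemma exists_mul_self_dvd_or_eq_mul_coprime {N : ℕ} (hN : 2 ≤ N) (hNp : ¬ N.Prime)
    (hmem : N ∉ ({4, 6, 8, 12, 24} : Set ℕ)) :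
    (∃ a, 3 ≤ a ∧ a * a ∣ N) ∨ ∃ p d, 1 < p ∧ p.Coprime 6 ∧ 2 ≤ d ∧ p.Coprime d ∧ N = p * d := by
  by_cases h5 : ∃ p, p.Prime ∧ p ∣ N ∧ 5 ≤ p
  · obtain ⟨p, hp, ⟨d, rfl⟩, hp5⟩ := h5
    by_cases hpd : p ∣ d
    · exact Or.inl ⟨p, by omega, mul_dvd_mul_left p hpd⟩
    have hp6 : p.Coprime 6 := Nat.Coprime.mul_right (m := 2) (n := 3)
      ((Nat.coprime_primes hp Nat.prime_two).2 (by omega))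
      ((Nat.coprime_primes hp Nat.prime_three).2 (by omega))
    have hd : 2 ≤ d := by
      rcases d with _ | _ | d
      · simp at hN
      · simp [hp] at hNp
      · omega
    exact Or.inr ⟨p, d, hp.one_lt, hp6, hd, (Nat.Prime.coprime_iff_not_dvd hp).2 hpd, rfl⟩
  push Not at h5
  by_cases h16 : 16 ∣ N
  · exact Or.inl ⟨4, by norm_num, h16⟩
  by_cases h9 : 9 ∣ N
  · exact Or.inl ⟨3, le_rfl, h9⟩
  exact absurd (mem_of_forall_prime_dvd_lt_five hN hNp h16 h9 h5) hmem

lemma not_monoReducible_of_mem {N : ℕ} (hN : N ∈ ({4, 6, 8, 12, 24} : Set ℕ)) (k : ZMod N)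
    (hk : k ≠ 0) : ¬ MonoReducible k := by
  simp only [Set.mem_insert_iff, Set.mem_singleton_iff] at hN
  rcases hN with rfl | rfl | rfl | rfl | rfl <;>
    exact IrreducibilityCertificate.not_monoReducible (B := 25) (by revert k; decide)

/-- `N ≥ 2` is monomially irreducible iff `N` is prime or
`N ∈ {4, 6, 8, 12, 24}`. -/
theorem stmt_0 (N : ℕ) (hN : 2 ≤ N) :
    MonomiallyIrreducible N ↔ N.Prime ∨ N ∈ ({4, 6, 8, 12, 24} : Set ℕ) := by
  have : NeZero N := ⟨by omega⟩
  rw [monomiallyIrreducible_iff]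
  constructor
  · intro hirr
    by_contra! hN'
    obtain ⟨k, hk⟩ : ∃ k : ZMod N, MonoReducible k := by
      rcases exists_mul_self_dvd_or_eq_mul_coprime hN hN'.1 hN'.2 with
        ⟨a, ha, haN⟩ | ⟨p, d, hp, hp6, hd, hpd, rfl⟩
      · exact exists_monoReducible_of_mul_self_dvd (by omega) ha haN
      · exact exists_monoReducible_of_coprime hp hp6 hd hpd
    exact hirr k hk.ne_zero hk
  · rintro (hp | hmem)
    · have : Fact N.Prime := ⟨hp⟩
      exact fun k _ => not_monoReducible k
    · exact not_monoReducible_of_mem hmem
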